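/- With the chain complex of free abelian groups described in the context, the element a := [0,1,1,0] + [0,1,0,1] ∈ C_3 satisfies: (i) ∂_3 a = 0; (ii) a ∈ sDeg_3 (indeed a = x − sgn(t)·(t·x) for x = [0,1,1,0] and t the transposition swapping coordinates 2 and 3, which has sgn(t) = −1); (iii) a does not lie in the image of ∂_4 : C_4 → C_3. Consequently the subcomplexes sDeg_* and Deg_* + sDeg_* of C_* have nonvanishing homology in degree 3; in particular, with integer coefficients the symmetry subcomplex of a symmetric simplicial abelian group need not be acyclic. -/

import Mathlib

/-- Pointwise negation of a Boolean tuple. -/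
def negv {m : ℕ} (v : Fin m → Bool) : Fin m → Bool := fun i => !(v i)

/-- The equivalence relation identifying a tuple with its pointwise negation. -/
def boolSetoid (m : ℕ) : Setoid (Fin m → Bool) where
  r u v := u = v ∨ u = negv v
  iseqv := by
    constructor
    · intro x; exact Or.inl rfl
    · rintro x y (rfl | rfl)
      · exact Or.inl rfl
      · right; funext i; simp [negv]
    · rintro x y z (rfl | rfl) (rfl | rfl)
      · exact Or.inl rfl
      · exact Or.inr rfl
      · exact Or.inr rfl
      · left; funext i; simp [negv]

/-- `Q_m`: tuples `Fin m → Bool` modulo pointwise negation (`m = n+1` in degree `n`). -/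
abbrev Qn (m : ℕ) := Quotient (boolSetoid m)

/-- The chain group: the free abelian group on `Q_m`. -/
abbrev Cn (m : ℕ) := Qn m →₀ ℤ

/-- Deleting the `i`-th coordinate descends to the quotient. -/
def qdel (m : ℕ) (i : Fin (m + 1)) : Qn (m + 1) → Qn m :=
  Quotient.map (fun v => v ∘ Fin.succAbove i) (by
    rintro u v (rfl | rfl)
    · exact Or.inl rfl
    · exact Or.inr rfl)

/-- Duplicating the `i`-th coordinate descends to the quotient. -/
def qdup (m : ℕ) (i : Fin (m + 1)) : Qn (m + 1) → Qn (m + 2) :=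
  Quotient.map (fun v => v ∘ Fin.predAbove i) (by
    rintro u v (rfl | rfl)
    · exact Or.inl rfl
    · exact Or.inr rfl)

/-- Permuting the coordinates descends to the quotient. -/
def qperm (m : ℕ) (t : Equiv.Perm (Fin m)) : Qn m → Qn m :=
  Quotient.map (fun v => v ∘ t) (by
    rintro u v (rfl | rfl)
    · exact Or.inl rfl
    · exact Or.inr rfl)

/-- The face map `d_i`. -/
noncomputable def face (m : ℕ) (i : Fin (m + 1)) : Cn (m + 1) →ₗ[ℤ] Cn m :=
  Finsupp.lmapDomain ℤ ℤ (qdel m i)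

/-- The degeneracy map `s_i`. -/
noncomputable def deg (m : ℕ) (i : Fin (m + 1)) : Cn (m + 1) →ₗ[ℤ] Cn (m + 2) :=
  Finsupp.lmapDomain ℤ ℤ (qdup m i)

/-- The action of a permutation. -/
noncomputable def pact (m : ℕ) (t : Equiv.Perm (Fin m)) : Cn m →ₗ[ℤ] Cn m :=
  Finsupp.lmapDomain ℤ ℤ (qperm m t)

/-- The differential `∂ = ∑ (-1)^i d_i`. -/
noncomputable def del (m : ℕ) : Cn (m + 1) →ₗ[ℤ] Cn m :=
  ∑ i : Fin (m + 1), ((-1 : ℤ) ^ (i : ℕ)) • face m i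

/-- The symmetry subgroup `sDeg`, spanned by all `c - sgn(t) • (t • c)`. -/
noncomputable def sDeg (m : ℕ) : Submodule ℤ (Cn m) :=
  Submodule.span ℤ
    {y | ∃ (c : Cn m) (t : Equiv.Perm (Fin m)), y = c - (Equiv.Perm.sign t : ℤ) • pact m t c}

/-- The degeneracy subgroup `Deg`, generated by the images of the degeneracies. -/
noncomputable def Deg : ∀ m : ℕ, Submodule ℤ (Cn m)
  | 0 => ⊥
  | 1 => ⊥
  | (m + 2) => ⨆ i : Fin (m + 1), LinearMap.range (deg m i)

/-- The tuple `(0,1,1,0)`. -/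
def x3 : Fin 4 → Bool := ![false, true, true, false]

/-- The tuple `(0,1,0,1)`. -/
def y3 : Fin 4 → Bool := ![false, true, false, true]

/-- The cycle `a = [0,1,1,0] + [0,1,0,1]`. -/
noncomputable def aelt : Cn 4 :=
  Finsupp.single (Quotient.mk (boolSetoid 4) x3) 1 +
    Finsupp.single (Quotient.mk (boolSetoid 4) y3) 1

/-! Modulo 2 the signs in `∂` disappear, so if every `(m+1)`-tuple has an even number of
faces in the class `q`, then `q` has even coefficient in every boundary. For `q = [0,1,0,1]`
this holds (a finite check), while `a` has coefficient `1` there; so `a` is not a boundary,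
although `∂a = 0` and `a = x + t·x ∈ sDeg` for the transposition `t = (2 3)`. -/

open Finset

instance boolSetoid.decidableRel (m : ℕ) : DecidableRel (boolSetoid m).r := fun u v =>
  inferInstanceAs (Decidable (u = v ∨ u = negv v))

lemma del_single_apply (m : ℕ) (p : Qn (m + 1)) (n : ℤ) (q : Qn m) :
    del m (Finsupp.single p n) q =
      n * ∑ i : Fin (m + 1), (-1) ^ (i : ℕ) * if qdel m i p = q then 1 else 0 := by
  simp only [del, face, LinearMap.coe_sum, LinearMap.coe_smul, Finset.sum_apply, Pi.smul_apply,
    Finsupp.lmapDomain_apply, Finsupp.mapDomain_single, Finsupp.smul_single, Int.zsmul_eq_mul,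
    Finsupp.coe_finsetSum, Finsupp.single_apply, mul_sum]
  refine sum_congr rfl fun i _ => ?_
  split_ifs <;> ring

lemma even_del_apply_of_even_card_qdel {m : ℕ} {q : Qn m}
    (h : ∀ p : Qn (m + 1), Even #{i | qdel m i p = q}) (b : Cn (m + 1)) : Even (del m b q) := by
  induction b using Finsupp.induction_linear with
  | zero => simp
  | add b c hb hc => simpa only [map_add, Finsupp.add_apply] using hb.add hc
  | single p n =>
    rw [del_single_apply]
    refine Even.mul_left (ZMod.intCast_eq_zero_iff_even.mp ?_) n
    push_cast
    simpa [ZMod.neg_eq_self_mod_two, sum_boole] using ZMod.natCast_eq_zero_iff_even.mpr (h p)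

/- A face of `v` is `±[0,1,0,1]` only if `v` has at most one pair of equal neighbours;
then exactly two deletions work: the two ends if there is no such pair, else its two members. -/
lemma even_card_qdel_eq_y3 (p : Qn 5) : Even #{i | qdel 4 i p = Quotient.mk _ y3} := by
  revert p; decide

lemma aelt_apply_y3 : aelt (Quotient.mk _ y3) = 1 := by
  simp only [aelt, Finsupp.add_apply, Finsupp.single_apply]
  decide

lemma del_ne_aelt (b : Cn 5) : del 4 b ≠ aelt := fun h => by
  have h_even := even_del_apply_of_even_card_qdel even_card_qdel_eq_y3 b
  rw [h, aelt_apply_y3] at h_even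
  exact Int.not_even_one h_even

/- `∂[0,1,1,0] = [0,0,1] - [0,1,1] = -∂[0,1,0,1]`. -/
lemma del_aelt : del 3 aelt = 0 := by
  ext q
  simp only [aelt, map_add, Finsupp.add_apply, del_single_apply, one_mul, Finsupp.coe_zero,
    Pi.zero_apply]
  revert q; decide

lemma pact_single_mk (m : ℕ) (t : Equiv.Perm (Fin m)) (v : Fin m → Bool) (n : ℤ) :
    pact m t (Finsupp.single (Quotient.mk _ v) n) = Finsupp.single (Quotient.mk _ (v ∘ t)) n :=
  Finsupp.mapDomain_single

lemma pact_swap_x3 :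
    pact 4 (Equiv.swap (2 : Fin 4) 3) (Finsupp.single (Quotient.mk (boolSetoid 4) x3) 1) =
      Finsupp.single (Quotient.mk (boolSetoid 4) y3) 1 := by
  rw [pact_single_mk, show x3 ∘ Equiv.swap (2 : Fin 4) 3 = y3 by decide]

lemma sign_swap_two_three : Equiv.Perm.sign (Equiv.swap (2 : Fin 4) 3) = -1 :=
  Equiv.Perm.sign_swap (by decide)

lemma aelt_eq_sub_sign_smul_pact :
    aelt = Finsupp.single (Quotient.mk (boolSetoid 4) x3) 1 -
      (Equiv.Perm.sign (Equiv.swap (2 : Fin 4) 3) : ℤ) •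
        pact 4 (Equiv.swap (2 : Fin 4) 3) (Finsupp.single (Quotient.mk (boolSetoid 4) x3) 1) := by
  rw [pact_swap_x3, sign_swap_two_three, aelt]
  simp [sub_eq_add_neg]

lemma aelt_mem_sDeg : aelt ∈ sDeg 4 :=
  Submodule.subset_span ⟨_, _, aelt_eq_sub_sign_smul_pact⟩

/-- `a = [0,1,1,0] + [0,1,0,1]` is a cycle lying in `sDeg_3` (indeed
`a = x - sgn(t)·(t·x)` for `x = [0,1,1,0]` and `t` the transposition swapping
coordinates 2 and 3, with `sgn t = -1`), but `a` is not a boundary; consequently the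
subcomplexes `sDeg_*` and `Deg_* + sDeg_*` have nonvanishing homology in degree `3`:
with integer coefficients the symmetry subcomplex of a symmetric simplicial abelian
group need not be acyclic. -/
theorem stmt8 :
    -- (i)  `∂₃ a = 0`
    del 3 aelt = 0 ∧
    -- (ii)  `a ∈ sDeg₃`, coming from the transposition `t = (2 3)` of sign `-1`
    (aelt =
        Finsupp.single (Quotient.mk (boolSetoid 4) x3) 1 -
          (Equiv.Perm.sign (Equiv.swap (2 : Fin 4) 3) : ℤ) •
            pact 4 (Equiv.swap (2 : Fin 4) 3)
              (Finsupp.single (Quotient.mk (boolSetoid 4) x3) 1) ∧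
      Equiv.Perm.sign (Equiv.swap (2 : Fin 4) 3) = -1 ∧
      pact 4 (Equiv.swap (2 : Fin 4) 3) (Finsupp.single (Quotient.mk (boolSetoid 4) x3) 1) =
        Finsupp.single (Quotient.mk (boolSetoid 4) y3) 1 ∧
      aelt ∈ sDeg 4) ∧
    -- (iii)  `a` is not a boundary
    (∀ b : Cn 5, del 4 b ≠ aelt) ∧
    -- consequently `sDeg_*` has nonvanishing homology in degree 3 ...
    (∃ z ∈ sDeg 4, del 3 z = 0 ∧ ∀ y ∈ sDeg 5, del 4 y ≠ z) ∧
    -- ... and so does `Deg_* + sDeg_*`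
    (∃ z ∈ Deg 4 ⊔ sDeg 4, del 3 z = 0 ∧ ∀ y ∈ Deg 5 ⊔ sDeg 5, del 4 y ≠ z) :=
  ⟨del_aelt,
    ⟨aelt_eq_sub_sign_smul_pact, sign_swap_two_three, pact_swap_x3, aelt_mem_sDeg⟩,
    del_ne_aelt,
    ⟨aelt, aelt_mem_sDeg, del_aelt, fun y _ => del_ne_aelt y⟩,
    ⟨aelt, Submodule.mem_sup_right aelt_mem_sDeg, del_aelt, fun y _ => del_ne_aelt y⟩⟩
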